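/- arXiv:1410.7857 — 2 statements merged into one kernel-verified Lean document; each statement's English description precedes it below -/
import Mathlib

section
/- Let W be a real vector space. For σ ∈ ΛW and α ∈ W*, let Ψ(σ, α) : ΛW → ΛW be the ℝ-linear map x ↦ σ ∧ ι_α(x). Then for all homogeneous σ ∈ Λ^p W and σ̂ ∈ Λ^q W and all α, α̂ ∈ W*: Ψ(σ, α) ∘ Ψ(σ̂, α̂) − (−1)^{(p+1)(q+1)} Ψ(σ̂, α̂) ∘ Ψ(σ, α) = Ψ(σ ∧ ι_α(σ̂), α̂) − (−1)^{(p+1)(q+1)} Ψ(σ̂ ∧ ι_{α̂}(σ), α). -/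
/-- The degree-`k` homogeneous component `Λᵏ W` of the exterior algebra. -/
noncomputable def piece (W : Type*) [AddCommGroup W] [Module ℝ W] (k : ℕ) :
    Submodule ℝ (ExteriorAlgebra ℝ W) :=
  (LinearMap.range (ExteriorAlgebra.ι ℝ : W →ₗ[ℝ] ExteriorAlgebra ℝ W)) ^ k

/-!
The axioms give `c α (ι m * x) = α m • x - ι m * c α x`, the recursion defining Mathlib's
`contractLeft α`; hence `c α = contractLeft α`, and contractions anticommute. Expanding both
composites by the Leibniz rule yields the right-hand side plus the terms `σ σ̂ ι_α ι_α̂ x` and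
`σ̂ σ ι_α̂ ι_α x`, which cancel by graded commutativity `σ σ̂ = (-1)^{pq} σ̂ σ` and anticommutation.
-/

namespace CliffordAlgebra

variable {R M : Type*} [CommRing R] [AddCommGroup M] [Module R M] {Q : QuadraticForm R M}

theorem eq_contractLeft_of_ι_mul (d : Module.Dual R M)
    (f : CliffordAlgebra Q →ₗ[R] CliffordAlgebra Q) (h_one : f 1 = 0)
    (h_ι_mul : ∀ m x, f (ι Q m * x) = d m • x - ι Q m * f x) :
    f = contractLeft d := by
  refine LinearMap.ext fun x => ?_
  induction x using left_induction with
  | algebraMap r =>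
    rw [Algebra.algebraMap_eq_smul_one, map_smul, map_smul, h_one, contractLeft_one]
  | add x y hx hy => rw [map_add, map_add, hx, hy]
  | ι_mul x m hx => rw [h_ι_mul, contractLeft_ι_mul, hx]

end CliffordAlgebra

namespace ExteriorAlgebra

variable {R M : Type*} [CommRing R] [AddCommGroup M] [Module R M]

theorem ι_mul_eq_neg_one_pow_smul_mul_ι (m : M) {k : ℕ} {y : ExteriorAlgebra R M}
    (hy : y ∈ ⋀[R]^k M) : ι R m * y = (-1 : R) ^ k • (y * ι R m) := by
  induction hy using Submodule.pow_induction_on_left' with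
  | algebraMap r => rw [pow_zero, one_smul, Algebra.commutes]
  | add x y i _ _ hx hy => rw [mul_add, hx, hy, add_mul, smul_add]
  | mem_mul n hn i x _ hx =>
    obtain ⟨n, rfl⟩ := hn
    rw [← mul_assoc, eq_neg_of_add_eq_zero_left (ι_add_mul_swap m n), neg_mul, mul_assoc, hx,
      mul_smul_comm, ← mul_assoc, pow_succ, mul_neg_one, neg_smul]

theorem mul_eq_neg_one_pow_smul_mul_of_mem_exteriorPower {p q : ℕ} {x y : ExteriorAlgebra R M}
    (hx : x ∈ ⋀[R]^p M) (hy : y ∈ ⋀[R]^q M) : x * y = (-1 : R) ^ (p * q) • (y * x) := by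
  induction hx using Submodule.pow_induction_on_left' with
  | algebraMap r => rw [zero_mul, pow_zero, one_smul, Algebra.commutes]
  | add x x' i _ _ hx hx' => rw [add_mul, hx, hx', mul_add, smul_add]
  | mem_mul n hn i x _ hx =>
    obtain ⟨n, rfl⟩ := hn
    rw [mul_assoc, hx, mul_smul_comm, ← mul_assoc, ι_mul_eq_neg_one_pow_smul_mul_ι n hy,
      smul_mul_assoc, smul_smul, mul_assoc, ← pow_add, Nat.succ_mul]

end ExteriorAlgebra

/-- for `Ψ(σ, α) : x ↦ σ ∧ ι_α(x)` and homogeneous `σ ∈ Λᵖ W`, `σ̂ ∈ Λᑫ W`: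
`Ψ(σ,α)∘Ψ(σ̂,α̂) − (−1)^{(p+1)(q+1)} Ψ(σ̂,α̂)∘Ψ(σ,α)
  = Ψ(σ ∧ ι_α(σ̂), α̂) − (−1)^{(p+1)(q+1)} Ψ(σ̂ ∧ ι_{α̂}(σ), α)`.
Here `c α` is the contraction by `α`, characterized by the stated axioms. -/
theorem stmt13 (W : Type*) [AddCommGroup W] [Module ℝ W]
    (c : Module.Dual ℝ W → ExteriorAlgebra ℝ W →ₗ[ℝ] ExteriorAlgebra ℝ W)
    (hc1 : ∀ α, c α 1 = 0)
    (hc2 : ∀ α (w : W), c α (ExteriorAlgebra.ι ℝ w) = algebraMap ℝ _ (α w))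
    (hc3 : ∀ α (k : ℕ) (x y : ExteriorAlgebra ℝ W), x ∈ piece W k →
      c α (x * y) = c α x * y + ((-1 : ℝ) ^ k) • (x * c α y))
    (p q : ℕ) (σ σh : ExteriorAlgebra ℝ W) (hσ : σ ∈ piece W p) (hσh : σh ∈ piece W q)
    (α αh : Module.Dual ℝ W) :
    ∀ x : ExteriorAlgebra ℝ W,
      σ * c α (σh * c αh x) -
        ((-1 : ℝ) ^ ((p + 1) * (q + 1))) • (σh * c αh (σ * c α x)) =
      (σ * c α σh) * c αh x -
        ((-1 : ℝ) ^ ((p + 1) * (q + 1))) • ((σh * c αh σ) * c α x) := by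
  have hc : ∀ β, c β = CliffordAlgebra.contractLeft β := fun β =>
    CliffordAlgebra.eq_contractLeft_of_ι_mul β (c β) (hc1 β) fun m x => by
      rw [hc3 β 1 _ _ (by rw [piece, pow_one]; exact LinearMap.mem_range_self _ m), hc2,
        pow_one, neg_one_smul, ← Algebra.smul_def, sub_eq_add_neg]
  have h_even : (-1 : ℝ) ^ (2 * p) = 1 := (even_two_mul p).neg_one_pow
  intro x
  rw [hc3 α q σh _ hσh, hc3 αh p σ _ hσ, hc, hc, CliffordAlgebra.contractLeft_comm]
  simp only [mul_add, mul_smul_comm, smul_add, mul_neg, smul_neg, ← mul_assoc]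
  rw [ExteriorAlgebra.mul_eq_neg_one_pow_smul_mul_of_mem_exteriorPower hσ hσh, smul_mul_assoc]
  match_scalars
  · ring
  · linear_combination (-1 : ℝ) ^ q * (-1) ^ (p * q) * h_even
  · ring
end

section
/- Let n be a natural number, let W be a finite-dimensional real vector space with basis (w₁, …, w_m) and dual basis (w₁*, …, w_m*), let P = MvPolynomial (Fin n) ℝ be the polynomial algebra in variables X₁, …, Xₙ, let F : (Fin n → ℝ) → W and G : W → (Fin n → ℝ) be linear maps, and write Fμ = F(e_μ) for the standard basis vectors e_μ. Define d_F = Σ_{μ=1}^{n} (∂/∂X_μ) ⊗ (x ↦ ι(Fμ) ∧ x) and d*_G = Σ_{ν=1}^{m} (multiplication by the linear polynomial Σ_{κ=1}^{n} (G(w_ν))_κ X_κ) ⊗ ι_{w_ν*} on P ⊗ ΛW. Then the anticommutator satisfies d_F ∘ d*_G + d*_G ∘ d_F = E₁ ⊗ id + id ⊗ E₂, where E₁ : P → P is given by E₁(p) = Σ_{μ=1}^{n} (Σ_{κ=1}^{n} (G(Fμ))_κ X_κ) · (∂p/∂X_μ) and E₂ : ΛW → ΛW is given by E₂(x) = Σ_{ν=1}^{m}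 ι(F(G(w_ν))) ∧ ι_{w_ν*}(x). -/
open scoped TensorProduct

/-!
Write `d_F = ∑ μ, ∂_μ ⊗ e(Fμ)` and `d*_G = ∑ ν, m(ℓ_ν) ⊗ ι_ν`, where `ℓ_ν = ∑ κ, (G w_ν)_κ X_κ`.
For each pair `(μ, ν)` the polynomial factors commute up to the scalar `[∂_μ, m(ℓ_ν)] = (G w_ν)_μ`
and the exterior factors anticommute up to the scalar `{e(Fμ), ι_ν} = w_ν*(Fμ)`, so the
anticommutator of the two tensor products is
`w_ν*(Fμ) • (m(ℓ_ν) ∂_μ ⊗ 1) + (G w_ν)_μ • (1 ⊗ e(Fμ) ι_ν)`.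
Summing over `μ, ν`, and expanding `G(Fμ)` in the basis `w` and `G w_ν` in the standard basis,
gives `E₁ ⊗ 1 + 1 ⊗ E₂`.
-/

namespace LinearMap

variable {R M N P : Type*} [Semiring R] [AddCommMonoid M] [AddCommMonoid N] [AddCommMonoid P]
  [Module R M] [Module R N] [Module R P]

theorem finsetSum_comp {ι : Type*} (s : Finset ι) (f : ι → N →ₗ[R] P) (g : M →ₗ[R] N) :
    (∑ i ∈ s, f i) ∘ₗ g = ∑ i ∈ s, f i ∘ₗ g := by
  ext x; simp [LinearMap.sum_apply]

theorem comp_finsetSum {ι : Type*} (s : Finset ι) (f : N →ₗ[R] P) (g : ι → M →ₗ[R] N) :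
    f ∘ₗ (∑ i ∈ s, g i) = ∑ i ∈ s, f ∘ₗ g i := by
  ext x; simp [LinearMap.sum_apply]

end LinearMap

namespace TensorProduct

variable {R M N P Q : Type*} [CommSemiring R] [AddCommMonoid M] [AddCommMonoid N]
  [AddCommMonoid P] [AddCommMonoid Q] [Module R M] [Module R N] [Module R P] [Module R Q]

theorem map_finsetSum_left {ι : Type*} (s : Finset ι) (f : ι → M →ₗ[R] P) (g : N →ₗ[R] Q) :
    map (∑ i ∈ s, f i) g = ∑ i ∈ s, map (f i) g := by
  simp only [← mapBilinear_apply, map_sum, LinearMap.sum_apply]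

theorem map_finsetSum_right {ι : Type*} (s : Finset ι) (f : M →ₗ[R] P) (g : ι → N →ₗ[R] Q) :
    map f (∑ i ∈ s, g i) = ∑ i ∈ s, map f (g i) := by
  simp only [← mapBilinear_apply, map_sum]

theorem map_comp_map_add_map_comp_map {A C : Module.End R M} {B D : Module.End R N} {a b : R}
    (hAC : A ∘ₗ C = C ∘ₗ A + a • LinearMap.id) (hBD : B ∘ₗ D + D ∘ₗ B = b • LinearMap.id) :
    map A B ∘ₗ map C D + map C D ∘ₗ map A B =
      b • map (C ∘ₗ A) LinearMap.id + a • map LinearMap.id (B ∘ₗ D) := by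
  rw [← map_comp, ← map_comp, hAC, map_add_left, map_smul_left, add_right_comm, ← map_add_right,
    hBD, map_smul_right]

end TensorProduct

theorem Derivation.toLinearMap_comp_mulLeft {R A : Type*} [CommSemiring R] [CommSemiring A]
    [Algebra R A] (D : Derivation R A A) (a : A) :
    D.toLinearMap ∘ₗ LinearMap.mulLeft R a =
      LinearMap.mulLeft R a ∘ₗ D.toLinearMap + LinearMap.mulLeft R (D a) := by
  ext p
  simp [D.leibniz, mul_comm p]

theorem MvPolynomial.pderiv_comp_mulLeft_linearCombination_X {R σ : Type*} [CommSemiring R]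
    [Fintype σ] (i : σ) (v : σ → R) :
    (pderiv i).toLinearMap ∘ₗ LinearMap.mulLeft R (∑ j, v j • (X j : MvPolynomial σ R)) =
      LinearMap.mulLeft R (∑ j, v j • (X j : MvPolynomial σ R)) ∘ₗ (pderiv i).toLinearMap +
        v i • LinearMap.id := by
  classical
  rw [Derivation.toLinearMap_comp_mulLeft]
  congr 1
  refine LinearMap.ext fun p => ?_
  simp [pderiv_X, Pi.single_apply, smul_eq_C_mul]

theorem Module.Basis.apply_eq_sum_coord_smul {ι R M N : Type*} [Fintype ι] [CommSemiring R]
    [AddCommMonoid M] [AddCommMonoid N] [Module R M] [Module R N] (b : Module.Basis ι R M)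
    (f : M →ₗ[R] N) (x : M) : f x = ∑ i, b.coord i x • f (b i) := by
  conv_lhs => rw [← b.sum_repr x]
  simp only [map_sum, map_smul, Module.Basis.coord_apply]

theorem Module.Basis.mulLeft_apply_eq_sum_coord_smul {ι R M A : Type*} [Fintype ι]
    [CommSemiring R] [AddCommMonoid M] [Module R M] [Semiring A] [Algebra R A]
    (b : Module.Basis ι R M) (f : M →ₗ[R] A) (x : M) :
    LinearMap.mulLeft R (f x) = ∑ i, b.coord i x • LinearMap.mulLeft R (f (b i)) :=
  b.apply_eq_sum_coord_smul ((Algebra.lmul R A).toLinearMap ∘ₗ f) x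

section Contraction

variable {W : Type*} [AddCommGroup W] [Module ℝ W]

theorem mulLeft_ι_comp_add_comp_mulLeft_ι (γ : ExteriorAlgebra ℝ W →ₗ[ℝ] ExteriorAlgebra ℝ W)
    (α : Module.Dual ℝ W)
    (hι : ∀ x : W, γ (ExteriorAlgebra.ι ℝ x) = algebraMap ℝ _ (α x))
    (hmul : ∀ (k : ℕ) (x y : ExteriorAlgebra ℝ W), x ∈ piece W k →
      γ (x * y) = γ x * y + ((-1 : ℝ) ^ k) • (x * γ y))
    (v : W) :
    LinearMap.mulLeft ℝ (ExteriorAlgebra.ι ℝ v) ∘ₗ γ +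
        γ ∘ₗ LinearMap.mulLeft ℝ (ExteriorAlgebra.ι ℝ v) = α v • LinearMap.id := by
  have hv : ExteriorAlgebra.ι ℝ v ∈ piece W 1 := by
    rw [piece, pow_one]
    exact ⟨v, rfl⟩
  refine LinearMap.ext fun y => ?_
  simp [hmul 1 _ y hv, hι, Algebra.smul_def]

end Contraction

theorem stmt18_general (n m : ℕ) (W : Type*) [AddCommGroup W] [Module ℝ W]
    (w : Module.Basis (Fin m) ℝ W)
    (c : Module.Dual ℝ W → ExteriorAlgebra ℝ W →ₗ[ℝ] ExteriorAlgebra ℝ W)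
    (hc2 : ∀ α (x : W), c α (ExteriorAlgebra.ι ℝ x) = algebraMap ℝ _ (α x))
    (hc3 : ∀ α (k : ℕ) (x y : ExteriorAlgebra ℝ W), x ∈ piece W k →
      c α (x * y) = c α x * y + ((-1 : ℝ) ^ k) • (x * c α y))
    (F : (Fin n → ℝ) →ₗ[ℝ] W) (G : W →ₗ[ℝ] (Fin n → ℝ))
    (dF dG : (MvPolynomial (Fin n) ℝ ⊗[ℝ] ExteriorAlgebra ℝ W) →ₗ[ℝ]
             (MvPolynomial (Fin n) ℝ ⊗[ℝ] ExteriorAlgebra ℝ W))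
    (hdF : dF = ∑ μ : Fin n,
      TensorProduct.map (MvPolynomial.pderiv μ).toLinearMap
        (LinearMap.mulLeft ℝ (ExteriorAlgebra.ι ℝ (F (Pi.single μ 1)))))
    (hdG : dG = ∑ ν : Fin m,
      TensorProduct.map
        (LinearMap.mulLeft ℝ (∑ κ : Fin n, (G (w ν) κ) • (MvPolynomial.X κ : MvPolynomial (Fin n) ℝ)))
        (c (w.coord ν)))
    (E₁ : MvPolynomial (Fin n) ℝ →ₗ[ℝ] MvPolynomial (Fin n) ℝ)
    (hE₁ : E₁ = ∑ μ : Fin n,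
      (LinearMap.mulLeft ℝ
          (∑ κ : Fin n, (G (F (Pi.single μ 1)) κ) • (MvPolynomial.X κ : MvPolynomial (Fin n) ℝ))) ∘ₗ
        (MvPolynomial.pderiv μ).toLinearMap)
    (E₂ : ExteriorAlgebra ℝ W →ₗ[ℝ] ExteriorAlgebra ℝ W)
    (hE₂ : E₂ = ∑ ν : Fin m,
      (LinearMap.mulLeft ℝ (ExteriorAlgebra.ι ℝ (F (G (w ν))))) ∘ₗ c (w.coord ν)) :
    dF ∘ₗ dG + dG ∘ₗ dF =
      TensorProduct.map E₁ LinearMap.id + TensorProduct.map LinearMap.id E₂ := by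
  have hGF (μ : Fin n) :
      LinearMap.mulLeft ℝ
          (∑ κ, G (F (Pi.single μ 1)) κ • (MvPolynomial.X κ : MvPolynomial (Fin n) ℝ)) =
        ∑ ν, w.coord ν (F (Pi.single μ 1)) •
          LinearMap.mulLeft ℝ (∑ κ, G (w ν) κ • (MvPolynomial.X κ : MvPolynomial (Fin n) ℝ)) :=
    w.mulLeft_apply_eq_sum_coord_smul (Fintype.linearCombination ℝ MvPolynomial.X ∘ₗ G) _
  have hFG (ν : Fin m) :
      LinearMap.mulLeft ℝ (ExteriorAlgebra.ι ℝ (F (G (w ν)))) =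
        ∑ μ, G (w ν) μ • LinearMap.mulLeft ℝ (ExteriorAlgebra.ι ℝ (F (Pi.single μ 1))) := by
    simpa using
      (Pi.basisFun ℝ (Fin n)).mulLeft_apply_eq_sum_coord_smul (ExteriorAlgebra.ι ℝ ∘ₗ F) _
  have hcomm (μ : Fin n) (ν : Fin m) :=
    MvPolynomial.pderiv_comp_mulLeft_linearCombination_X μ (G (w ν))
  have hanticomm (μ : Fin n) (ν : Fin m) :=
    mulLeft_ι_comp_add_comp_mulLeft_ι (c (w.coord ν)) _ (hc2 _) (hc3 _) (F (Pi.single μ 1))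
  subst hdF hdG hE₁ hE₂
  simp only [hGF, hFG, LinearMap.finsetSum_comp, LinearMap.comp_finsetSum, LinearMap.smul_comp,
    TensorProduct.map_finsetSum_left, TensorProduct.map_finsetSum_right,
    TensorProduct.map_smul_left, TensorProduct.map_smul_right]
  -- fixing the outer index type makes `sum_comm` swap only the `∑ ν, ∑ μ` sums, without looping
  simp only [Finset.sum_comm (γ := Fin m), ← Finset.sum_add_distrib,
    TensorProduct.map_comp_map_add_map_comp_map (hcomm _ _) (hanticomm _ _)]

/-- the anticommutator of the Cartan–Poincaré operators satisfies
`d_F ∘ d*_G + d*_G ∘ d_F = E₁ ⊗ id + id ⊗ E₂`, where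
`E₁(p) = Σ_μ (Σ_κ (G(Fμ))_κ X_κ) · ∂p/∂X_μ` and
`E₂(x) = Σ_ν ι(F(G(w_ν))) ∧ ι_{w_ν*}(x)`.
Here `c α` is the contraction by the functional `α`, characterized by the stated axioms. -/
theorem stmt18 (n m : ℕ) (W : Type*) [AddCommGroup W] [Module ℝ W] [FiniteDimensional ℝ W]
    (w : Module.Basis (Fin m) ℝ W)
    (c : Module.Dual ℝ W → ExteriorAlgebra ℝ W →ₗ[ℝ] ExteriorAlgebra ℝ W)
    (hc1 : ∀ α, c α 1 = 0)
    (hc2 : ∀ α (x : W), c α (ExteriorAlgebra.ι ℝ x) = algebraMap ℝ _ (α x))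
    (hc3 : ∀ α (k : ℕ) (x y : ExteriorAlgebra ℝ W), x ∈ piece W k →
      c α (x * y) = c α x * y + ((-1 : ℝ) ^ k) • (x * c α y))
    (F : (Fin n → ℝ) →ₗ[ℝ] W) (G : W →ₗ[ℝ] (Fin n → ℝ))
    (dF dG : (MvPolynomial (Fin n) ℝ ⊗[ℝ] ExteriorAlgebra ℝ W) →ₗ[ℝ]
             (MvPolynomial (Fin n) ℝ ⊗[ℝ] ExteriorAlgebra ℝ W))
    (hdF : dF = ∑ μ : Fin n,
      TensorProduct.map (MvPolynomial.pderiv μ).toLinearMap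
        (LinearMap.mulLeft ℝ (ExteriorAlgebra.ι ℝ (F (Pi.single μ 1)))))
    (hdG : dG = ∑ ν : Fin m,
      TensorProduct.map
        (LinearMap.mulLeft ℝ (∑ κ : Fin n, (G (w ν) κ) • (MvPolynomial.X κ : MvPolynomial (Fin n) ℝ)))
        (c (w.coord ν)))
    (E₁ : MvPolynomial (Fin n) ℝ →ₗ[ℝ] MvPolynomial (Fin n) ℝ)
    (hE₁ : E₁ = ∑ μ : Fin n,
      (LinearMap.mulLeft ℝ
          (∑ κ : Fin n, (G (F (Pi.single μ 1)) κ) • (MvPolynomial.X κ : MvPolynomial (Fin n) ℝ))) ∘ₗ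
        (MvPolynomial.pderiv μ).toLinearMap)
    (E₂ : ExteriorAlgebra ℝ W →ₗ[ℝ] ExteriorAlgebra ℝ W)
    (hE₂ : E₂ = ∑ ν : Fin m,
      (LinearMap.mulLeft ℝ (ExteriorAlgebra.ι ℝ (F (G (w ν))))) ∘ₗ c (w.coord ν)) :
    dF ∘ₗ dG + dG ∘ₗ dF =
      TensorProduct.map E₁ LinearMap.id + TensorProduct.map LinearMap.id E₂ :=
  stmt18_general n m W w c hc2 hc3 F G dF dG hdF hdG E₁ hE₁ E₂ hE₂
end
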